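/- Let Γ : ℂᴺ → (N×N Hermitian matrices) satisfy C₊·δ²·|z|⁴ ≤ 2·z*Γ(z)z ≤ C₋·δ²·|z|⁴ for all z, with constants 0 < C₊ ≤ C₋ and δ > 0. Suppose z : [0,∞) → ℂᴺ is differentiable, z(0) = z₀ ≠ 0, and d/dt|z(t)|² = -2·z(t)*Γ(z(t))z(t) + r(t) with |r(t)| ≤ ε·δ²·|z(t)|⁴ for some 0 ≤ ε < C₊. Then for all t ≥ 0, (|z₀|⁻² + (C₋+ε)δ²t)^{-1/2} ≤ |z(t)| ≤ (|z₀|⁻² + (C₊-ε)δ²t)^{-1/2}; in particular z(t) ≠ 0 for all t. -/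

import Mathlib

/-!
With `u = |z|²`, the hypotheses give `-(C₋ + ε) δ² u² ≤ u' ≤ -(C₊ - ε) δ² u²`. The Riccati
equation `y' = -K y²`, `y 0 = v⁻¹`, is solved by `(v + K t)⁻¹`, and a barrier argument traps `u`
between the two Riccati solutions; the lower one is positive, so `z` never vanishes.
-/

open Matrix Set Filter Topology ComplexOrder

theorem hasDerivAt_inv_add_mul {v K x : ℝ} (h : v + K * x ≠ 0) :
    HasDerivAt (fun y => (v + K * y)⁻¹) (-K * (v + K * x)⁻¹ ^ 2) x := by
  have hlin : HasDerivAt (fun y => v + K * y) K x := by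
    simpa using ((hasDerivAt_id x).const_mul K).const_add v
  exact (hlin.inv h).congr_deriv (by rw [inv_pow]; ring)

theorem le_inv_add_mul_of_deriv_le_neg_mul_sq {f f' : ℝ → ℝ} {K v T : ℝ} (hK : 0 ≤ K)
    (hv : 0 < v) (hT : 0 ≤ T) (hf : ContinuousOn f (Icc 0 T))
    (hf' : ∀ x ∈ Ico 0 T, HasDerivWithinAt f (f' x) (Ici x) x) (h0 : f 0 ≤ v⁻¹)
    (hbound : ∀ x ∈ Ico 0 T, f' x ≤ -K * f x ^ 2) :
    f T ≤ (v + K * T)⁻¹ := by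
  have hpos : ∀ x ∈ Icc 0 T, 0 < v + K * x := fun x hx => by nlinarith [hx.1]
  have hR : ∀ x ∈ Icc 0 T, HasDerivAt (fun y => (v + K * y)⁻¹) (-K * (v + K * x)⁻¹ ^ 2) x :=
    fun x hx => hasDerivAt_inv_add_mul (hpos x hx).ne'
  -- The barrier theorem needs a strict inequality at contact points: `(v + K x)⁻¹ + η (1 + x)`
  -- is a strict supersolution, and `η → 0` recovers the bound.
  have hperturbed : ∀ η > 0, f T ≤ (v + K * T)⁻¹ + η * (1 + T) := by
    intro η hη
    refine image_le_of_deriv_right_lt_deriv_boundary' hf hf' (by simp; linarith)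
      (B := fun x => (v + K * x)⁻¹ + η * (1 + x)) (B' := fun x => -K * (v + K * x)⁻¹ ^ 2 + η)
      (fun x hx => ((hR x hx).continuousAt.add (by fun_prop)).continuousWithinAt)
      (fun x hx => ?_) (fun x hx hfx => ?_) (right_mem_Icc.2 hT)
    · exact ((hR x (Ico_subset_Icc_self hx)).add
        (((hasDerivAt_id x).const_add 1).const_mul η)).hasDerivWithinAt.congr_deriv (by simp)
    · have hRpos : 0 ≤ (v + K * x)⁻¹ := (inv_pos.2 (hpos x (Ico_subset_Icc_self hx))).le
      have hsq : (v + K * x)⁻¹ ^ 2 ≤ f x ^ 2 := by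
        rw [hfx]
        exact pow_le_pow_left₀ hRpos (le_add_of_nonneg_right (by nlinarith [hx.1])) 2
      nlinarith [hbound x hx]
  refine ge_of_tendsto (x := 𝓝[>] 0) ?_ (eventually_nhdsWithin_of_forall hperturbed)
  exact tendsto_nhdsWithin_of_tendsto_nhds (by
    simpa using ((continuous_id.mul continuous_const).const_add (v + K * T)⁻¹).tendsto 0)

theorem inv_add_mul_le_of_neg_mul_sq_le_deriv {f f' : ℝ → ℝ} {K v T : ℝ} (hK : 0 ≤ K)
    (hv : 0 < v) (hT : 0 ≤ T) (hf : ContinuousOn f (Icc 0 T))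
    (hf' : ∀ x ∈ Ico 0 T, HasDerivWithinAt f (f' x) (Ici x) x) (h0 : v⁻¹ ≤ f 0)
    (hbound : ∀ x ∈ Ico 0 T, -K * f x ^ 2 ≤ f' x) :
    (v + K * T)⁻¹ ≤ f T := by
  -- For `K' > K` the Riccati solution with rate `K'` is a strict subsolution; let `K' → K`.
  have hperturbed : ∀ K' > K, (v + K' * T)⁻¹ ≤ f T := by
    intro K' hK'
    have hpos : ∀ x ∈ Icc 0 T, 0 < v + K' * x := fun x hx => by nlinarith [hx.1]
    have hR : ∀ x ∈ Icc 0 T,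
        HasDerivAt (fun y => (v + K' * y)⁻¹) (-K' * (v + K' * x)⁻¹ ^ 2) x :=
      fun x hx => hasDerivAt_inv_add_mul (hpos x hx).ne'
    refine image_le_of_deriv_right_lt_deriv_boundary'
      (fun x hx => (hR x hx).continuousAt.continuousWithinAt)
      (fun x hx => (hR x (Ico_subset_Icc_self hx)).hasDerivWithinAt)
      (by simpa using h0) hf hf' (fun x hx hfx => ?_) (right_mem_Icc.2 hT)
    have hRpos : 0 < (v + K' * x)⁻¹ ^ 2 := by
      have := hpos x (Ico_subset_Icc_self hx); positivity
    have := hbound x hx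
    rw [← hfx] at this
    nlinarith
  refine le_of_tendsto (x := 𝓝[>] K) ?_ (eventually_nhdsWithin_of_forall hperturbed)
  refine tendsto_nhdsWithin_of_tendsto_nhds (ContinuousAt.tendsto ?_)
  exact (continuousAt_const.add (continuousAt_id.mul continuousAt_const)).inv₀
    (by positivity : 0 < v + K * T).ne'

theorem Real.rpow_neg_one_half_eq_sqrt_inv {x : ℝ} (hx : 0 ≤ x) :
    x ^ (-(1 / 2) : ℝ) = √x⁻¹ := by
  rw [Real.sqrt_inv, Real.sqrt_eq_rpow, ← Real.rpow_neg hx]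

theorem stmt_19_general {N : ℕ} (Γ : (Fin N → ℂ) → Matrix (Fin N) (Fin N) ℂ)
    (Cplus Cminus δ ε : ℝ) (hCpm : Cplus ≤ Cminus)
    (hε0 : 0 ≤ ε) (hε : ε < Cplus)
    (hΓbound : ∀ w : Fin N → ℂ,
      Cplus * δ ^ 2 * ((star w ⬝ᵥ w).re) ^ 2 ≤ 2 * (star w ⬝ᵥ (Γ w).mulVec w).re ∧
      2 * (star w ⬝ᵥ (Γ w).mulVec w).re ≤ Cminus * δ ^ 2 * ((star w ⬝ᵥ w).re) ^ 2)
    (z : ℝ → Fin N → ℂ) (z₀ : Fin N → ℂ) (hz0 : z 0 = z₀) (hz₀ne : z₀ ≠ 0)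
    (r : ℝ → ℝ)
    (hderiv : ∀ t, 0 ≤ t →
      HasDerivWithinAt (fun s => (star (z s) ⬝ᵥ z s).re)
        (-2 * (star (z t) ⬝ᵥ (Γ (z t)).mulVec (z t)).re + r t) (Set.Ici 0) t)
    (hr : ∀ t, 0 ≤ t → |r t| ≤ ε * δ ^ 2 * ((star (z t) ⬝ᵥ z t).re) ^ 2) :
    ∀ t, 0 ≤ t →
      (((star z₀ ⬝ᵥ z₀).re⁻¹ + (Cminus + ε) * δ ^ 2 * t) ^ (-(1/2) : ℝ)
          ≤ Real.sqrt ((star (z t) ⬝ᵥ z t).re) ∧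
        Real.sqrt ((star (z t) ⬝ᵥ z t).re)
          ≤ ((star z₀ ⬝ᵥ z₀).re⁻¹ + (Cplus - ε) * δ ^ 2 * t) ^ (-(1/2) : ℝ)) ∧
      z t ≠ 0 := by
  intro t ht
  subst hz0
  set u : ℝ → ℝ := fun s => (star (z s) ⬝ᵥ z s).re
  have hu₀ : 0 < u 0 := (Complex.pos_iff.1 (dotProduct_star_self_pos_iff.2 hz₀ne)).1
  have hcont : ContinuousOn u (Icc 0 t) := fun x hx =>
    (hderiv x hx.1).continuousWithinAt.mono Icc_subset_Ici_self
  have hderiv' := fun x (hx : x ∈ Ico 0 t) => (hderiv x hx.1).mono (Ici_subset_Ici.2 hx.1)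
  have hKp : 0 ≤ (Cplus - ε) * δ ^ 2 := mul_nonneg (by linarith) (sq_nonneg δ)
  have hKm : 0 ≤ (Cminus + ε) * δ ^ 2 := mul_nonneg (by linarith) (sq_nonneg δ)
  have hupper := le_inv_add_mul_of_deriv_le_neg_mul_sq hKp (inv_pos.2 hu₀) ht hcont hderiv'
    (inv_inv (u 0)).ge fun x hx => by
      nlinarith [(hΓbound (z x)).1, (abs_le.1 (hr x hx.1)).2]
  have hlower := inv_add_mul_le_of_neg_mul_sq_le_deriv hKm (inv_pos.2 hu₀) ht hcont hderiv'
    (inv_inv (u 0)).le fun x hx => by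
      nlinarith [(hΓbound (z x)).2, (abs_le.1 (hr x hx.1)).1]
  have hlower_pos : 0 < ((u 0)⁻¹ + (Cminus + ε) * δ ^ 2 * t)⁻¹ := by positivity
  refine ⟨⟨?_, ?_⟩, fun hzt => ?_⟩
  · rw [Real.rpow_neg_one_half_eq_sqrt_inv (by positivity)]
    exact Real.sqrt_le_sqrt hlower
  · rw [Real.rpow_neg_one_half_eq_sqrt_inv (by positivity)]
    exact Real.sqrt_le_sqrt hupper
  · have : u t = 0 := by simp [u, hzt]
    linarith

theorem stmt_19 {N : ℕ} (Γ : (Fin N → ℂ) → Matrix (Fin N) (Fin N) ℂ)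
    (hHerm : ∀ z, (Γ z).IsHermitian)
    (Cplus Cminus δ ε : ℝ) (hCp : 0 < Cplus) (hCpm : Cplus ≤ Cminus)
    (hδ : 0 < δ) (hε0 : 0 ≤ ε) (hε : ε < Cplus)
    (hΓbound : ∀ w : Fin N → ℂ,
      Cplus * δ ^ 2 * ((star w ⬝ᵥ w).re) ^ 2 ≤ 2 * (star w ⬝ᵥ (Γ w).mulVec w).re ∧
      2 * (star w ⬝ᵥ (Γ w).mulVec w).re ≤ Cminus * δ ^ 2 * ((star w ⬝ᵥ w).re) ^ 2)
    (z : ℝ → Fin N → ℂ) (z₀ : Fin N → ℂ) (hz0 : z 0 = z₀) (hz₀ne : z₀ ≠ 0)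
    (r : ℝ → ℝ)
    (hderiv : ∀ t, 0 ≤ t →
      HasDerivWithinAt (fun s => (star (z s) ⬝ᵥ z s).re)
        (-2 * (star (z t) ⬝ᵥ (Γ (z t)).mulVec (z t)).re + r t) (Set.Ici 0) t)
    (hr : ∀ t, 0 ≤ t → |r t| ≤ ε * δ ^ 2 * ((star (z t) ⬝ᵥ z t).re) ^ 2) :
    ∀ t, 0 ≤ t →
      (((star z₀ ⬝ᵥ z₀).re⁻¹ + (Cminus + ε) * δ ^ 2 * t) ^ (-(1/2) : ℝ)
          ≤ Real.sqrt ((star (z t) ⬝ᵥ z t).re) ∧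
        Real.sqrt ((star (z t) ⬝ᵥ z t).re)
          ≤ ((star z₀ ⬝ᵥ z₀).re⁻¹ + (Cplus - ε) * δ ^ 2 * t) ^ (-(1/2) : ℝ)) ∧
      z t ≠ 0 :=
  stmt_19_general Γ Cplus Cminus δ ε hCpm hε0 hε hΓbound z z₀ hz0 hz₀ne r hderiv hr
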